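/- arXiv:2412.05008 — 3 statements merged into one kernel-verified Lean document; each statement's English description precedes it below -/
import Mathlib

section
/- Let H be a complex Hilbert space and let P, Q be bounded operators on H with 0 ≤ Q ≤ P. Then for every scalar t ∈ (0,1) there exists an invertible bounded operator Y on H such that P − t·Q = Y* P Y. -/
/-! With `R = P - t Q` one has `(1 - t) P ≤ R ≤ P`, so `‖√R x‖` and `‖√P x‖` are comparable
uniformly in `x`. Hence `√P x ↦ √R x` extends to an isomorphism of the common closure of the
ranges of `√P` and `√R`; together with the identity on its orthogonal complement this gives an
invertible `Z` with `Z √P = √R`, and `Y = Z*` satisfies `Y* P Y = (Z √P)(Z √P)* = R`. -/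

open scoped ComplexOrder

noncomputable section

section Defs

variable {A H : Type*}
variable [NormedAddCommGroup H] [InnerProductSpace ℂ H]

/-- An operator on a complex inner product space is positive:
`0 ≤ ⟪x, T x⟫` for all `x`. -/
def IsPosOp (T : H →L[ℂ] H) : Prop := ∀ x : H, 0 ≤ (inner ℂ x (T x) : ℂ)

variable [Ring A] [StarRing A] [Algebra ℂ A]

/-- Complete positivity of a linear map `Φ : A → B(H)`:
`∑_{i,j} ⟪h i, Φ(a i* a j) (h j)⟫ ≥ 0` for all finite families. -/
def IsCPMap (Φ : A →ₗ[ℂ] (H →L[ℂ] H)) : Prop :=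
  ∀ (n : ℕ) (a : Fin n → A) (h : Fin n → H),
    0 ≤ ∑ i, ∑ j, (inner ℂ (h i) ((Φ (star (a i) * a j)) (h j)) : ℂ)

/-- `CP^{(P)}(A, B(H))`: the CP maps `Φ` with `Φ 1 = P`. -/
def CPP (P : H →L[ℂ] H) : Set (A →ₗ[ℂ] (H →L[ℂ] H)) := {Φ | IsCPMap Φ ∧ Φ 1 = P}

/-- `CCP(A, B(H))`: the contractive CP maps, i.e. CP maps with `Φ 1 ≤ 1`. -/
def CCPmaps : Set (A →ₗ[ℂ] (H →L[ℂ] H)) := {Φ | IsCPMap Φ ∧ IsPosOp (1 - Φ 1)}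

variable [CompleteSpace H]

/-- `Ad_T : X ↦ T* X T`, as a linear map on `B(H)`. -/
def conjAd (T : H →L[ℂ] H) : (H →L[ℂ] H) →ₗ[ℂ] (H →L[ℂ] H) where
  toFun X := star T * X * T
  map_add' X Y := by simp [add_mul, mul_add]
  map_smul' c X := by simp [mul_smul_comm, smul_mul_assoc]

/-- `Φ ∈ CP^{(P)}` is a `P`-`C*`-extreme point of `CP^{(P)}(A, B(H))`:
whenever `Φ = ∑ Ad_{T j} ∘ Φs j` is a proper `P`-`C*`-convex combination of members of
`CP^{(P)}`, each `Φs j` equals `Ad_{S j} ∘ Φ` for some invertible `S j`. -/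
def IsPCExtreme (P : H →L[ℂ] H) (Φ : A →ₗ[ℂ] (H →L[ℂ] H)) : Prop :=
  Φ ∈ CPP (A := A) P ∧
  ∀ (n : ℕ) (T : Fin n → (H →L[ℂ] H)) (Φs : Fin n → (A →ₗ[ℂ] (H →L[ℂ] H))),
    (∀ j, IsUnit (T j)) → (∀ j, Φs j ∈ CPP (A := A) P) →
    (∑ j, star (T j) * P * T j) = P →
    Φ = ∑ j, (conjAd (T j)).comp (Φs j) →
    ∀ j, ∃ S : H →L[ℂ] H, IsUnit S ∧ Φs j = (conjAd S).comp Φ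

/-- `Φ ∈ C` is a `C*`-extreme point of the `C*`-convex set `C`:
whenever `Φ = ∑ Ad_{T j} ∘ Φs j` is a proper `C*`-convex combination of members of `C`,
each `Φs j` is unitarily equivalent to `Φ`. -/
def IsCstarExtreme (C : Set (A →ₗ[ℂ] (H →L[ℂ] H))) (Φ : A →ₗ[ℂ] (H →L[ℂ] H)) : Prop :=
  Φ ∈ C ∧
  ∀ (n : ℕ) (T : Fin n → (H →L[ℂ] H)) (Φs : Fin n → (A →ₗ[ℂ] (H →L[ℂ] H))),
    (∀ j, IsUnit (T j)) → (∀ j, Φs j ∈ C) →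
    (∑ j, star (T j) * T j) = 1 →
    Φ = ∑ j, (conjAd (T j)).comp (Φs j) →
    ∀ j, ∃ U : H →L[ℂ] H, U ∈ unitary (H →L[ℂ] H) ∧ Φs j = (conjAd U).comp Φ

/-- `Φ ∈ C` is a linear extreme point of the convex set `C`. -/
def IsLinExtreme (C : Set (A →ₗ[ℂ] (H →L[ℂ] H))) (Φ : A →ₗ[ℂ] (H →L[ℂ] H)) : Prop :=
  Φ ∈ C ∧
  ∀ (n : ℕ) (t : Fin n → ℝ) (Φs : Fin n → (A →ₗ[ℂ] (H →L[ℂ] H))),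
    (∀ j, 0 < t j ∧ t j < 1) → (∀ j, Φs j ∈ C) → (∑ j, t j) = 1 →
    Φ = ∑ j, (t j : ℂ) • Φs j →
    ∀ j, Φs j = Φ

end Defs

open scoped InnerProductSpace

namespace LinearMap

theorem ker_le_ker_of_norm_le {R E F G : Type*} [Semiring R] [AddCommMonoid E] [Module R E]
    [NormedAddCommGroup F] [Module R F] [NormedAddCommGroup G] [Module R G]
    (f : E →ₗ[R] F) (g : E →ₗ[R] G) {C : ℝ} (h : ∀ x, ‖g x‖ ≤ C * ‖f x‖) : ker f ≤ ker g :=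
  fun x hx => norm_le_zero_iff.mp (by simpa [mem_ker.mp hx] using h x)

end LinearMap

namespace Submodule

variable {𝕜 E : Type*} [RCLike 𝕜] [NormedAddCommGroup E] [InnerProductSpace 𝕜 E]
  (K : Submodule 𝕜 E) [K.HasOrthogonalProjection]

def extendByIdOnOrthogonal : (K →L[𝕜] K) →* (E →L[𝕜] E) where
  toFun T := K.subtypeL ∘L T ∘L K.orthogonalProjectionOnto + Kᗮ.starProjection
  map_one' := by
    ext x
    exact K.starProjection_add_starProjection_orthogonal x
  map_mul' T S := by
    ext x
    simp [orthogonalProjectionOnto_starProjection_of_le le_rfl, starProjection_eq_self_iff.mpr]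

theorem extendByIdOnOrthogonal_apply_coe (T : K →L[𝕜] K) (x : K) :
    K.extendByIdOnOrthogonal T x = T x := by
  simp [extendByIdOnOrthogonal]

end Submodule

namespace ContinuousLinearMap

variable {𝕜 H : Type*} [RCLike 𝕜] [NormedAddCommGroup H] [InnerProductSpace 𝕜 H]

theorem re_inner_apply_le_of_le {S T : H →L[𝕜] H} (h : S ≤ T) (x : H) :
    RCLike.re ⟪S x, x⟫_𝕜 ≤ RCLike.re ⟪T x, x⟫_𝕜 := by
  have := h.re_inner_nonneg_left x
  rwa [sub_apply, inner_sub_left, map_sub, sub_nonneg] at this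

variable [CompleteSpace H]

theorem IsStarNormal.topologicalClosure_range {T : H →L[𝕜] H} (hT : IsStarNormal T) :
    T.range.topologicalClosure = T.kerᗮ := by
  rw [← Submodule.orthogonal_orthogonal_eq_closure, IsStarNormal.orthogonal_range hT]

theorem exists_isUnit_mul_eq_of_norm_le {A B : H →L[𝕜] H} (hA : IsStarNormal A)
    (hB : IsStarNormal B) (hBA : ∃ C, ∀ x, ‖B x‖ ≤ C * ‖A x‖)
    (hAB : ∃ C, ∀ x, ‖A x‖ ≤ C * ‖B x‖) :
    ∃ Z : H →L[𝕜] H, IsUnit Z ∧ Z * A = B := by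
  have hK : B.range.topologicalClosure = A.range.topologicalClosure := by
    obtain ⟨C, hC⟩ := hBA
    obtain ⟨C', hC'⟩ := hAB
    rw [IsStarNormal.topologicalClosure_range hA, IsStarNormal.topologicalClosure_range hB,
      le_antisymm (LinearMap.ker_le_ker_of_norm_le _ _ hC)
        (LinearMap.ker_le_ker_of_norm_le _ _ hC')]
  set K := A.range.topologicalClosure
  let e (T : H →L[𝕜] H) (hT : T.range.topologicalClosure = K) : H →ₗ[𝕜] K :=
    (T : H →ₗ[𝕜] H).codRestrict K fun x => hT ▸ T.range.le_topologicalClosure ⟨x, rfl⟩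
  have he (T : H →L[𝕜] H) (hT) : DenseRange (e T hT) := by
    rw [DenseRange, Subtype.dense_iff, ← Set.range_comp]
    change (K : Set H) ⊆ closure (Set.range T)
    rw [← hT, Submodule.topologicalClosure_coe]
    rfl
  let Φ := (LinearEquiv.refl 𝕜 H).extend (e A rfl) (e B hK) (he A rfl) hBA (he B hK) hAB
  refine ⟨K.extendByIdOnOrthogonal (Φ : K →L[𝕜] K), IsUnit.map _ ⟨Φ.toUnit, rfl⟩, ?_⟩
  ext x
  have hΦ : Φ (e A rfl x) = e B hK x := LinearEquiv.extend_eq _ _ _ _ _ _ _ x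
  exact (K.extendByIdOnOrthogonal_apply_coe _ (e A rfl x)).trans (congrArg Subtype.val hΦ)

end ContinuousLinearMap

section LoewnerOrder

open ContinuousLinearMap

variable {H : Type*} [NormedAddCommGroup H] [InnerProductSpace ℂ H]

theorem IsPosOp.nonneg {T : H →L[ℂ] H} (hT : IsPosOp T) : 0 ≤ T := by
  rw [ContinuousLinearMap.nonneg_iff_isPositive, ContinuousLinearMap.isPositive_iff_complex]
  intro x
  obtain ⟨hre, him⟩ := Complex.nonneg_iff.mp (hT x)
  rw [← inner_conj_symm (T x) x, RCLike.conj_re]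
  exact ⟨Complex.ext rfl (by rw [Complex.ofReal_im, Complex.conj_im, ← him, neg_zero]), hre⟩

theorem ContinuousLinearMap.sq_norm_sqrt_apply [CompleteSpace H] {T : H →L[ℂ] H} (hT : 0 ≤ T)
    (x : H) :
    ‖CFC.sqrt T x‖ ^ 2 = RCLike.re ⟪T x, x⟫_ℂ := by
  have hs : IsSelfAdjoint (CFC.sqrt T) := (CFC.sqrt_nonneg T).isSelfAdjoint
  conv_rhs => rw [← CFC.sqrt_mul_sqrt_self T hT, mul_apply_eq_comp]
  rw [← adjoint_inner_right, hs.adjoint_eq, inner_self_eq_norm_sq]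

theorem exists_isUnit_eq_star_mul_mul_of_smul_le_of_le [CompleteSpace H] {P R : H →L[ℂ] H}
    (hP : 0 ≤ P) {c : ℝ} (hc : 0 < c) (hcR : c • P ≤ R) (hRP : R ≤ P) :
    ∃ Y : H →L[ℂ] H, IsUnit Y ∧ R = star Y * P * Y := by
  have hR : 0 ≤ R := (smul_nonneg hc.le hP).trans hcR
  set A := CFC.sqrt P
  set B := CFC.sqrt R
  have hA : IsSelfAdjoint A := (CFC.sqrt_nonneg P).isSelfAdjoint
  have hB : IsSelfAdjoint B := (CFC.sqrt_nonneg R).isSelfAdjoint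
  have hBA (x : H) : ‖B x‖ ≤ 1 * ‖A x‖ := by
    rw [one_mul, ← pow_le_pow_iff_left₀ (norm_nonneg _) (norm_nonneg _) two_ne_zero,
      sq_norm_sqrt_apply hR, sq_norm_sqrt_apply hP]
    exact re_inner_apply_le_of_le hRP x
  have hAB (x : H) : ‖A x‖ ≤ (√c)⁻¹ * ‖B x‖ := by
    have h := re_inner_apply_le_of_le hcR x
    rw [smul_apply, RCLike.real_smul_eq_coe_smul (K := ℂ), inner_smul_real_left, RCLike.smul_re,
      ← sq_norm_sqrt_apply hP, ← sq_norm_sqrt_apply hR] at h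
    rw [inv_mul_eq_div, le_div_iff₀ (Real.sqrt_pos.2 hc),
      ← pow_le_pow_iff_left₀ (by positivity) (norm_nonneg _) two_ne_zero, mul_pow,
      Real.sq_sqrt hc.le, mul_comm]
    exact h
  obtain ⟨Z, hZ, hZA⟩ :=
    exists_isUnit_mul_eq_of_norm_le hA.isStarNormal hB.isStarNormal ⟨1, hBA⟩ ⟨_, hAB⟩
  refine ⟨star Z, hZ.star, ?_⟩
  calc R = B * star B := by rw [hB.star_eq, CFC.sqrt_mul_sqrt_self R hR]
    _ = Z * A * star (Z * A) := by rw [hZA]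
    _ = Z * (A * A) * star Z := by rw [star_mul, hA.star_eq]; simp only [mul_assoc]
    _ = star (star Z) * P * star Z := by rw [star_star, CFC.sqrt_mul_sqrt_self P hP]

end LoewnerOrder

/-- Lemma 2.1 / `lem-Douglas-cor`. If `0 ≤ Q ≤ P` in `B(H)`, then for every
`t ∈ (0,1)` there is an invertible `Y ∈ B(H)` with `P - t Q = Y* P Y`. -/
theorem stmt0 {H : Type*} [NormedAddCommGroup H] [InnerProductSpace ℂ H] [CompleteSpace H]
    (P Q : H →L[ℂ] H) (hQ : IsPosOp Q) (hQP : IsPosOp (P - Q))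
    (t : ℝ) (ht : t ∈ Set.Ioo (0 : ℝ) 1) :
    ∃ Y : H →L[ℂ] H, IsUnit Y ∧ P - (t : ℂ) • Q = star Y * P * Y := by
  obtain ⟨ht0, ht1⟩ := ht
  have hQleP : Q ≤ P := sub_nonneg.mp hQP.nonneg
  rw [Complex.coe_smul]
  refine exists_isUnit_eq_star_mul_mul_of_smul_le_of_le (hQ.nonneg.trans hQleP) (sub_pos.2 ht1)
    ?_ (sub_le_self _ (smul_nonneg ht0.le hQ.nonneg))
  rw [← sub_nonneg]
  convert smul_nonneg ht0.le hQP.nonneg using 1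
  module
end
end

section
/- Let T ∈ B(H) be invertible and P ∈ B(H) be positive such that T* P T ≤ β·P for some scalar β > 0. Then the following are equivalent: (i) there exists a scalar α > 0 with α·P ≤ T* P T; (ii) the range of T* P^{1/2} equals the range of P^{1/2}; (iii) T* P^{1/2} = P^{1/2} Y for some invertible Y ∈ B(H). -/
open scoped ComplexOrder

noncomputable section

/-!
Write `P = R²` with `R` self-adjoint. Then `T* P T ≤ β P` and `α P ≤ T* P T` say
`‖R T x‖² ≤ β ‖R x‖²` and `α ‖R x‖² ≤ ‖R T x‖²`, and `T* R = (R T)*`. By Douglas' lemma the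
two-sided bound forces `ran (R T)* = ran R* = ran R`. Conversely, if `T* R` and `R` have the same
range, they also have the same kernel `N` (as `T*` is injective), so Douglas' factorization gives
bounded `C`, `D` with values in `Nᗮ` and `R C = T* R`, `T* R D = R`; then `C + proj_N` is
invertible with inverse `D + proj_N`. Finally `T* R = R Y` gives `R = (Y*)⁻¹ R T`, hence
`‖R x‖ ≤ ‖(Y*)⁻¹‖ ‖R T x‖`.
-/

open ContinuousLinearMap
open scoped InnerProductSpace

section RCLike

variable {𝕜 E : Type*} [RCLike 𝕜] [NormedAddCommGroup E] [InnerProductSpace 𝕜 E]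

lemma eq_of_mem_orthogonal_ker {F : Type*} [NormedAddCommGroup F] [NormedSpace 𝕜 F]
    {B : E →L[𝕜] F} {x y : E} (hx : x ∈ B.kerᗮ) (hy : y ∈ B.kerᗮ) (h : B x = B y) : x = y :=
  sub_eq_zero.mp <| Submodule.disjoint_def.mp B.ker.orthogonal_disjoint _
    (by simp [h]) (Submodule.sub_mem _ hx hy)

lemma mul_add_starProjection_eq_one (K : Submodule 𝕜 E) [K.HasOrthogonalProjection]
    {A B C D : E →L[𝕜] E} (hA : A.ker = K) (hB : B.ker = K) (hC : B * C = A) (hD : A * D = B)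
    (hCK : ∀ x, C x ∈ Kᗮ) (hDK : ∀ x, D x ∈ Kᗮ) :
    (C + K.starProjection) * (D + K.starProjection) = 1 := by
  have hBC : ∀ x, B (C x) = A x := fun x => by rw [← hC]; rfl
  have hAD : ∀ x, A (D x) = B x := fun x => by rw [← hD]; rfl
  have hCK' : ∀ x, C x ∈ B.kerᗮ := hB ▸ hCK
  have hQD : ∀ x, K.starProjection (D x) = 0 := fun x =>
    K.starProjection_apply_eq_zero_iff.mpr (hDK x)
  have hQQ : ∀ x, K.starProjection (K.starProjection x) = K.starProjection x := fun x =>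
    Submodule.starProjection_eq_self_iff.mpr (K.starProjection_apply_mem x)
  have hCQ : ∀ x, C (K.starProjection x) = 0 := fun x =>
    eq_of_mem_orthogonal_ker (hCK' _) (Submodule.zero_mem _) <| by
      rw [hBC, map_zero]
      exact hA ▸ K.starProjection_apply_mem x
  have hCD : ∀ x, C (D x) = x - K.starProjection x := fun x =>
    eq_of_mem_orthogonal_ker (hCK' _) (hB ▸ K.sub_starProjection_mem_orthogonal x) <| by
      rw [hBC, hAD, map_sub, show B (K.starProjection x) = 0 from
        hB ▸ K.starProjection_apply_mem x, sub_zero]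
  ext x
  simp [hQD, hCQ, hCD, hQQ]

variable [CompleteSpace E]

lemma inner_star_mul_self_apply (A : E →L[𝕜] E) (x : E) :
    ⟪x, (star A * A) x⟫_𝕜 = ((‖A x‖ ^ 2 : ℝ) : 𝕜) := by
  change ⟪x, star A (A x)⟫_𝕜 = _
  rw [star_eq_adjoint, adjoint_inner_right, inner_self_eq_norm_sq_to_K]
  norm_cast

lemma range_star_subset_of_norm_sq_le {A B : E →L[𝕜] E} {c : ℝ}
    (h : ∀ x, ‖A x‖ ^ 2 ≤ c * ‖B x‖ ^ 2) : Set.range ⇑(star A) ⊆ Set.range ⇑(star B) := by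
  have hle : ∀ x, ‖A x‖ ≤ √c * ‖B x‖ := fun x => by
    simpa [Real.sqrt_mul' _ (sq_nonneg _)] using Real.sqrt_le_sqrt (h x)
  have hker : B.ker ≤ A.ker := fun x hx => by
    simpa [show B x = 0 from hx] using hle x
  rintro _ ⟨u, rfl⟩
  -- the functional `B x ↦ ⟪u, A x⟫` on `ran B`, well defined since `ker B ≤ ker A`
  let φ : LinearMap.range (B : E →ₗ[𝕜] E) →ₗ[𝕜] 𝕜 :=
    innerₛₗ 𝕜 u ∘ₗ B.ker.liftQ A hker ∘ₗ (B : E →ₗ[𝕜] E).quotKerEquivRange.symm.toLinearMap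
  have hφ : ∀ x, φ ⟨B x, LinearMap.mem_range_self _ x⟩ = ⟪u, A x⟫_𝕜 := fun x => by
    change ⟪u, B.ker.liftQ (A : E →ₗ[𝕜] E) hker
      ((B : E →ₗ[𝕜] E).quotKerEquivRange.symm ⟨(B : E →ₗ[𝕜] E) x, _⟩)⟫_𝕜 = _
    rw [LinearMap.quotKerEquivRange_symm_apply_image, Submodule.mkQ_apply, Submodule.liftQ_apply]
    rfl
  have hbound : ∀ w, ‖φ w‖ ≤ ‖u‖ * √c * ‖w‖ := by
    rintro ⟨_, x, rfl⟩
    calc ‖φ ⟨B x, _⟩‖ = ‖⟪u, A x⟫_𝕜‖ := by rw [hφ]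
      _ ≤ ‖u‖ * (√c * ‖B x‖) := (norm_inner_le_norm _ _).trans (by gcongr; exact hle x)
      _ = _ := by rw [mul_assoc]; rfl
  obtain ⟨ψ, hψ, -⟩ := exists_extension_norm_eq _ (φ.mkContinuous _ hbound)
  refine ⟨(InnerProductSpace.toDual 𝕜 E).symm ψ, ext_inner_right 𝕜 fun x => ?_⟩
  rw [star_eq_adjoint, star_eq_adjoint, adjoint_inner_left, adjoint_inner_left,
    InnerProductSpace.toDual_symm_apply, hψ ⟨B x, LinearMap.mem_range_self _ x⟩]
  exact hφ x

lemma range_star_eq_of_norm_sq_le {A B : E →L[𝕜] E} {α β : ℝ} (hα : 0 < α)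
    (hle : ∀ x, ‖A x‖ ^ 2 ≤ β * ‖B x‖ ^ 2) (hge : ∀ x, α * ‖B x‖ ^ 2 ≤ ‖A x‖ ^ 2) :
    Set.range ⇑(star A) = Set.range ⇑(star B) :=
  (range_star_subset_of_norm_sq_le hle).antisymm <|
    range_star_subset_of_norm_sq_le fun x => (le_inv_mul_iff₀ hα).mpr (hge x)

lemma apply_starProjection_orthogonal_ker (B : E →L[𝕜] E) (x : E) :
    B (B.kerᗮ.starProjection x) = B x := by
  rw [Submodule.starProjection_orthogonal_val, map_sub,
    show B (B.ker.starProjection x) = 0 from B.ker.starProjection_apply_mem x, sub_zero]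

lemma exists_mul_eq_of_range_subset {A B : E →L[𝕜] E} (h : Set.range A ⊆ Set.range B) :
    ∃ C : E →L[𝕜] E, B * C = A ∧ ∀ x, C x ∈ B.kerᗮ := by
  obtain ⟨g, hg⟩ := (B : E →ₗ[𝕜] E).rangeRestrict.exists_rightInverse_of_surjective
    (LinearMap.range_rangeRestrict _)
  let C : E →ₗ[𝕜] E := B.kerᗮ.starProjection.toLinearMap ∘ₗ g ∘ₗ
    (A : E →ₗ[𝕜] E).codRestrict _ fun x => h ⟨x, rfl⟩
  have hC : ∀ x, C x ∈ B.kerᗮ := fun x => Submodule.starProjection_apply_mem _ _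
  have hBC : ∀ x, B (C x) = A x := fun x => by
    simp only [C, LinearMap.comp_apply, ContinuousLinearMap.coe_coe,
      apply_starProjection_orthogonal_ker]
    exact congrArg Subtype.val (LinearMap.congr_fun hg _)
  have hcont : Continuous C := C.continuous_of_seq_closed_graph fun u x y hu hy =>
    eq_of_mem_orthogonal_ker ((Submodule.isClosed_orthogonal _).mem_of_tendsto hy
        (Filter.Eventually.of_forall fun n => hC (u n))) (hC x) <|
      tendsto_nhds_unique ((B.continuous.tendsto y).comp hy)
        (by simpa only [Function.comp_def, hBC] using (A.continuous.tendsto x).comp hu)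
  exact ⟨⟨C, hcont⟩, ContinuousLinearMap.ext hBC, hC⟩

lemma exists_isUnit_eq_mul_of_range_eq_of_ker_eq {A B : E →L[𝕜] E}
    (hr : Set.range A = Set.range B) (hk : A.ker = B.ker) :
    ∃ Y : E →L[𝕜] E, IsUnit Y ∧ A = B * Y := by
  obtain ⟨C, hC, hCK⟩ := exists_mul_eq_of_range_subset hr.subset
  obtain ⟨D, hD, hDK⟩ := exists_mul_eq_of_range_subset hr.superset
  rw [hk] at hDK
  refine ⟨C + B.ker.starProjection,
    ⟨⟨_, D + B.ker.starProjection, mul_add_starProjection_eq_one _ hk rfl hC hD hCK hDK,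
      mul_add_starProjection_eq_one _ rfl hk hD hC hDK hCK⟩, rfl⟩, ?_⟩
  ext x
  simp [← hC, show B (B.ker.starProjection x) = 0 from B.ker.starProjection_apply_mem x]

lemma exists_pos_mul_norm_sq_le_of_eq_mul {A B Y : E →L[𝕜] E} (hY : IsUnit Y) (h : A = B * Y) :
    ∃ α : ℝ, 0 < α ∧ ∀ x, α * ‖star B x‖ ^ 2 ≤ ‖star A x‖ ^ 2 := by
  obtain ⟨u, rfl⟩ := hY
  set c := ‖star (↑u⁻¹ : E →L[𝕜] E)‖
  have hB : star B = star (↑u⁻¹ : E →L[𝕜] E) * star A := by simp [h, ← star_mul, mul_assoc]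
  refine ⟨(c ^ 2 + 1)⁻¹, by positivity, fun x => (inv_mul_le_iff₀ (by positivity)).mpr ?_⟩
  calc ‖star B x‖ ^ 2 ≤ (c * ‖star A x‖) ^ 2 := by
        gcongr; rw [hB]; exact (star (↑u⁻¹ : E →L[𝕜] E)).le_opNorm _
    _ ≤ (c ^ 2 + 1) * ‖star A x‖ ^ 2 := by rw [mul_pow]; gcongr; linarith

end RCLike

section Complex

variable {H : Type*} [NormedAddCommGroup H] [InnerProductSpace ℂ H] [CompleteSpace H]

lemma IsPosOp.isSelfAdjoint {R : H →L[ℂ] H} (hR : IsPosOp R) : IsSelfAdjoint R := by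
  refine isSelfAdjoint_iff_isSymmetric.mpr
    ((R : H →ₗ[ℂ] H).isSymmetric_iff_inner_map_self_real.mpr fun v => ?_)
  have hv : starRingEnd ℂ ⟪v, R v⟫_ℂ = ⟪v, R v⟫_ℂ := (IsSelfAdjoint.of_nonneg (hR v)).conj_eq
  change starRingEnd ℂ ⟪R v, v⟫_ℂ = ⟪R v, v⟫_ℂ
  rw [← inner_conj_symm (R v) v, hv, hv]

lemma isPosOp_star_mul_self_sub_smul_iff {A B : H →L[ℂ] H} {c : ℝ} :
    IsPosOp (star A * A - (c : ℂ) • (star B * B)) ↔ ∀ x, c * ‖B x‖ ^ 2 ≤ ‖A x‖ ^ 2 := by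
  refine forall_congr' fun x => ?_
  rw [sub_apply, smul_apply, inner_sub_right, inner_smul_right, inner_star_mul_self_apply,
    inner_star_mul_self_apply, sub_nonneg, RCLike.ofReal_eq_complex_ofReal]
  exact_mod_cast Iff.rfl

lemma isPosOp_smul_sub_star_mul_self_iff {A B : H →L[ℂ] H} {c : ℝ} :
    IsPosOp ((c : ℂ) • (star B * B) - star A * A) ↔ ∀ x, ‖A x‖ ^ 2 ≤ c * ‖B x‖ ^ 2 := by
  refine forall_congr' fun x => ?_
  rw [sub_apply, smul_apply, inner_sub_right, inner_smul_right, inner_star_mul_self_apply,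
    inner_star_mul_self_apply, sub_nonneg, RCLike.ofReal_eq_complex_ofReal]
  exact_mod_cast Iff.rfl

end Complex

theorem stmt1_general {H : Type*} [NormedAddCommGroup H] [InnerProductSpace ℂ H] [CompleteSpace H]
    (P R T : H →L[ℂ] H) (hR : IsPosOp R) (hRR : R * R = P)
    (hT : IsUnit T) (β : ℝ)
    (hdom : IsPosOp ((β : ℂ) • P - star T * P * T)) :
    ((∃ α : ℝ, 0 < α ∧ IsPosOp (star T * P * T - (α : ℂ) • P)) ↔
        Set.range ⇑(star T * R) = Set.range ⇑R) ∧
    ((Set.range ⇑(star T * R) = Set.range ⇑R) ↔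
        ∃ Y : H →L[ℂ] H, IsUnit Y ∧ star T * R = R * Y) := by
  subst hRR
  have hR_star : star R = R := hR.isSelfAdjoint.star_eq
  have hker : (star T * R).ker = R.ker := LinearMap.ker_comp_of_ker_eq_bot _ <|
    LinearMap.ker_eq_bot.mpr (isUnit_iff_bijective.mp hT.star).1
  have hS : star T * R = star (R * T) := by rw [star_mul, hR_star]
  have hTPT : star T * (R * R) * T = star (R * T) * (R * T) := by rw [← hS]; simp only [mul_assoc]
  have hP : R * R = star R * R := by rw [hR_star]
  rw [hTPT, hP, isPosOp_smul_sub_star_mul_self_iff] at hdom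
  rw [hS] at hker
  rw [hS, hTPT]
  simp only [hP, isPosOp_star_mul_self_sub_smul_iff]
  have hfactor : Set.range ⇑(star (R * T)) = Set.range ⇑R →
      ∃ Y : H →L[ℂ] H, IsUnit Y ∧ star (R * T) = R * Y := fun h =>
    exists_isUnit_eq_mul_of_range_eq_of_ker_eq h hker
  refine ⟨⟨fun ⟨α, hα, h⟩ => ?_, fun h => ?_⟩, hfactor, fun ⟨Y, hY, h⟩ => ?_⟩
  · simpa only [hR_star] using range_star_eq_of_norm_sq_le hα hdom h
  · obtain ⟨Y, hY, hRT⟩ := hfactor h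
    simpa only [hR_star, star_star] using exists_pos_mul_norm_sq_le_of_eq_mul hY hRT
  · rw [h]
    exact (isUnit_iff_bijective.mp hY).2.range_comp R

/-- Lemma `lem-invertible-conjugate-positive-inequality`. For `T` invertible and
`P ≥ 0` with `T* P T ≤ β P` for some `β > 0`, the following are equivalent:
(i) `α P ≤ T* P T` for some `α > 0`; (ii) `ran(T* P^0.5) = ran(P^0.5)`;
(iii) `T* P^0.5 = P^0.5 Y` for some invertible `Y`.  Here `R` denotes the positive
square root `P^0.5` of `P`. -/
theorem stmt1 {H : Type*} [NormedAddCommGroup H] [InnerProductSpace ℂ H] [CompleteSpace H]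
    (P R T : H →L[ℂ] H) (hP : IsPosOp P) (hR : IsPosOp R) (hRR : R * R = P)
    (hT : IsUnit T) (β : ℝ) (hβ : 0 < β)
    (hdom : IsPosOp ((β : ℂ) • P - star T * P * T)) :
    ((∃ α : ℝ, 0 < α ∧ IsPosOp (star T * P * T - (α : ℂ) • P)) ↔
        Set.range ⇑(star T * R) = Set.range ⇑R) ∧
    ((Set.range ⇑(star T * R) = Set.range ⇑R) ↔
        ∃ Y : H →L[ℂ] H, IsUnit Y ∧ star T * R = R * Y) :=
  stmt1_general P R T hR hRR hT β hdom
end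
end

section
/- Let A be a unital C*-algebra, H a complex Hilbert space, and P ∈ B(H) positive such that either P is invertible or H is finite-dimensional. Then for Φ ∈ CP^{(P)}(A,B(H)) the following are equivalent: (i) Φ is a P-C*-extreme point of CP^{(P)}(A,B(H)); (ii) whenever Φ = Ad_{T_1}∘Φ_1 + Ad_{T_2}∘Φ_2 with Φ_1, Φ_2 ∈ CP^{(P)}(A,B(H)) and T_1, T_2 ∈ B(H) invertible satisfying T_1* P T_1 + T_2* P T_2 = P, there exist invertible S_1, S_2 ∈ B(H) with Φ_j = Ad_{S_j}∘Φ for j = 1, 2. -/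
open scoped ComplexOrder

noncomputable section

/-!
Merging two terms of a `P`-`C*`-convex combination into one reduces the `n`-term condition to the
`(n-1)`-term one. If `Q = T₁* P T₁ + T₂* P T₂`, then `T₁* P T₁ ≤ Q ≤ P` with `T₁` invertible, which
forces `Q = R* P R` for an invertible `R`: by square roots when `P` is invertible, and when `H` is
finite-dimensional because `Q` and `P` then have kernels of the same dimension, so are congruent by
diagonalisation. Then `Ad_{T₁} ∘ Φ₁ + Ad_{T₂} ∘ Φ₂ = Ad_R ∘ Ψ` with `Ψ` in
`CP^{(P)}`, and once `Ψ = Ad_S ∘ Φ` is known, `Φ = Ad_{T₁ W} ∘ Φ₁ + Ad_{T₂ W} ∘ Φ₂` with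
`W = R⁻¹ S⁻¹` is a two-term decomposition. The weight conditions need no separate bookkeeping:
they are these decompositions evaluated at `1`.
-/

open CFC in
theorem exists_isUnit_star_mul_mul_eq_of_isStrictlyPositive {B : Type*} [CStarAlgebra B]
    [PartialOrder B] [StarOrderedRing B] {P Q : B} (hP : IsStrictlyPositive P)
    (hQ : IsStrictlyPositive Q) : ∃ R : B, IsUnit R ∧ star R * P * R = Q := by
  refine ⟨P ^ (-(1 / 2) : ℝ) * sqrt Q,
    (hP.rpow _ _).isUnit.mul ((isUnit_sqrt_iff Q hQ.nonneg).mpr hQ.isUnit), ?_⟩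
  rw [star_mul, (rpow_nonneg : 0 ≤ P ^ (-(1 / 2) : ℝ)).isSelfAdjoint.star_eq,
    (sqrt_nonneg Q).isSelfAdjoint.star_eq]
  calc sqrt Q * P ^ (-(1 / 2) : ℝ) * P * (P ^ (-(1 / 2) : ℝ) * sqrt Q)
      = sqrt Q * (P ^ (-(1 / 2) : ℝ) * P * P ^ (-(1 / 2) : ℝ)) * sqrt Q := by
        simp only [mul_assoc]
    _ = Q := by rw [conjugate_rpow_neg_one_half P hP, mul_one, sqrt_mul_sqrt_self Q hQ.nonneg]

theorem exists_ne_zero_sq_mul_eq {a b : ℝ} (ha : 0 ≤ a) (hb : 0 ≤ b) (h : a = 0 ↔ b = 0) :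
    ∃ c : ℝ, c ≠ 0 ∧ c ^ 2 * a = b := by
  rcases eq_or_ne a 0 with ha0 | ha0
  · exact ⟨1, one_ne_zero, by rw [ha0, h.mp ha0, mul_zero]⟩
  · have hb0 : b ≠ 0 := mt h.mpr ha0
    refine ⟨√(b / a), (Real.sqrt_pos.mpr (div_pos (hb.lt_of_ne' hb0) (ha.lt_of_ne' ha0))).ne', ?_⟩
    rw [Real.sq_sqrt (div_nonneg hb ha), div_mul_cancel₀ b ha0]

theorem Equiv.Perm.exists_forall_iff_of_card_eq {ι : Type*} [Fintype ι] {p q : ι → Prop}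
    [DecidablePred p] [DecidablePred q] (h : Fintype.card {i // p i} = Fintype.card {i // q i}) :
    ∃ σ : Equiv.Perm ι, ∀ i, p i ↔ q (σ i) := by
  let e : {i // p i} ≃ {i // q i} := Fintype.equivOfCardEq h
  exact ⟨e.extendSubtype, fun i =>
    ⟨e.extendSubtype_mem i, fun hq => by_contra fun hp => e.extendSubtype_not_mem i hp hq⟩⟩

section Operators

variable {H : Type*} [NormedAddCommGroup H] [InnerProductSpace ℂ H]

theorem isPosOp_iff_nonneg {T : H →L[ℂ] H} : IsPosOp T ↔ 0 ≤ T := by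
  rw [ContinuousLinearMap.nonneg_iff_isPositive, ContinuousLinearMap.isPositive_iff,
    LinearMap.isSymmetric_iff_inner_map_self_real, ← forall_and]
  refine forall_congr' fun x => ?_
  rw [← inner_conj_symm, ← Complex.star_def, star_nonneg_iff]
  exact ⟨fun h => ⟨Complex.conj_eq_iff_im.mpr (Complex.nonneg_iff.mp h).2.symm, h⟩, And.right⟩

variable [CompleteSpace H]

theorem inner_star_mul_mul_apply (R X : H →L[ℂ] H) (x y : H) :
    inner ℂ x ((star R * X * R) y) = inner ℂ (R x) (X (R y)) := by
  simp [ContinuousLinearMap.star_eq_adjoint, ContinuousLinearMap.adjoint_inner_right]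

theorem apply_eq_zero_of_inner_eq_zero {Q : H →L[ℂ] H} (hQ : 0 ≤ Q) {x : H}
    (hx : inner ℂ x (Q x) = 0) : Q x = 0 := by
  have hs : IsSelfAdjoint (CFC.sqrt Q) := (CFC.sqrt_nonneg Q).isSelfAdjoint
  have h : inner ℂ (CFC.sqrt Q x) ((1 : H →L[ℂ] H) (CFC.sqrt Q x)) = 0 := by
    rw [← inner_star_mul_mul_apply, hs.star_eq, mul_one, CFC.sqrt_mul_sqrt_self Q hQ, hx]
  rw [← CFC.sqrt_mul_sqrt_self Q hQ, ContinuousLinearMap.mul_def, ContinuousLinearMap.comp_apply,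
    inner_self_eq_zero.mp h, map_zero]

theorem ker_le_ker_of_le {P Q : H →L[ℂ] H} (hQ : 0 ≤ Q) (hQP : Q ≤ P) :
    LinearMap.ker (P : H →ₗ[ℂ] H) ≤ LinearMap.ker (Q : H →ₗ[ℂ] H) := by
  intro x hx
  have hPx : P x = 0 := hx
  refine apply_eq_zero_of_inner_eq_zero hQ (le_antisymm ?_
    (((ContinuousLinearMap.nonneg_iff_isPositive Q).mp hQ).inner_nonneg_right x))
  have := ((ContinuousLinearMap.le_def Q P).mp hQP).inner_nonneg_right x
  rwa [sub_apply, inner_sub_right, hPx, inner_zero_right, zero_sub, neg_nonneg] at this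

theorem finrank_ker_le_of_star_mul_mul_le [FiniteDimensional ℂ H] {P Q T : H →L[ℂ] H}
    (hP : 0 ≤ P) (hT : IsUnit T) (hTQ : star T * P * T ≤ Q) :
    Module.finrank ℂ (LinearMap.ker (Q : H →ₗ[ℂ] H))
      ≤ Module.finrank ℂ (LinearMap.ker (P : H →ₗ[ℂ] H)) := by
  have hTinj : Function.Injective T := (ContinuousLinearMap.isUnit_iff_bijective.mp hT).injective
  have hmaps : ∀ x ∈ LinearMap.ker (Q : H →ₗ[ℂ] H),
      (T : H →ₗ[ℂ] H) x ∈ LinearMap.ker (P : H →ₗ[ℂ] H) := fun x hx => by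
    have h0 := ker_le_ker_of_le (star_left_conjugate_nonneg hP T) hTQ hx
    exact (ContinuousLinearMap.isUnit_iff_bijective.mp hT.star).injective
      (by simpa [ContinuousLinearMap.mul_def] using h0)
  exact LinearMap.finrank_le_finrank_of_injective (f := (T : H →ₗ[ℂ] H).restrict hmaps)
    fun x y hxy => Subtype.ext (hTinj (congrArg Subtype.val hxy))

theorem exists_isUnit_star_mul_mul_eq_of_orthonormalBasis {ι : Type*} [Fintype ι]
    [DecidableEq ι] (e f : OrthonormalBasis ι ℂ H) {P Q : H →L[ℂ] H} {μ ν : ι → ℂ}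
    (w : ι → ℂˣ) (hPe : ∀ i, P (e i) = μ i • e i) (hQf : ∀ i, Q (f i) = ν i • f i)
    (hw : ∀ i, star (w i : ℂ) * w i * μ i = ν i) :
    ∃ R : H →L[ℂ] H, IsUnit R ∧ star R * P * R = Q := by
  have : FiniteDimensional ℂ H := .of_basis f.toBasis
  let L : H ≃L[ℂ] H :=
    (f.toBasis.equiv (e.toBasis.unitsSMul w) (Equiv.refl ι)).toContinuousLinearEquiv
  have hL : ∀ i, L (f i) = (w i : ℂ) • e i := fun i => by
    change f.toBasis.equiv _ _ (f.toBasis i) = _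
    rw [Module.Basis.equiv_apply, Module.Basis.unitsSMul_apply, Equiv.refl_apply,
      OrthonormalBasis.coe_toBasis, Units.smul_def]
  refine ⟨L, ((ContinuousLinearEquiv.unitsEquiv ℂ H).symm L).isUnit, ?_⟩
  refine ContinuousLinearMap.coe_injective (f.toBasis.ext fun j =>
    InnerProductSpace.ext_inner_left_basis f.toBasis fun i => ?_)
  simp only [ContinuousLinearMap.coe_coe, OrthonormalBasis.coe_toBasis, inner_star_mul_mul_apply]
  rcases eq_or_ne i j with rfl | hij
  · simp only [ContinuousLinearEquiv.coe_coe, hL, map_smul, hPe, hQf, ← hw, inner_smul_left,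
      inner_smul_right, e.inner_eq_ite, f.inner_eq_ite, Complex.star_def]
    ring
  · simp [hL, hPe, hQf, inner_smul_right, e.inner_eq_ite, f.inner_eq_ite, hij]

theorem exists_isUnit_star_mul_mul_eq_of_finrank_ker_eq [FiniteDimensional ℂ H]
    {P Q : H →L[ℂ] H} (hP : 0 ≤ P) (hQ : 0 ≤ Q)
    (hPQ : Module.finrank ℂ (LinearMap.ker (P : H →ₗ[ℂ] H))
      = Module.finrank ℂ (LinearMap.ker (Q : H →ₗ[ℂ] H))) :
    ∃ R : H →L[ℂ] H, IsUnit R ∧ star R * P * R = Q := by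
  have hP' := (ContinuousLinearMap.nonneg_iff_isPositive P).mp hP
  have hQ' := (ContinuousLinearMap.nonneg_iff_isPositive Q).mp hQ
  obtain ⟨n, hn⟩ : ∃ n, Module.finrank ℂ H = n := ⟨_, rfl⟩
  set μ := hP'.isSymmetric.eigenvalues hn
  set ν := hQ'.isSymmetric.eigenvalues hn
  have hcard : Fintype.card {i // μ i = 0} = Fintype.card {i // ν i = 0} := by
    have hμ := hP'.isSymmetric.card_filter_eigenvalues_eq hn 0
    have hν := hQ'.isSymmetric.card_filter_eigenvalues_eq hn 0
    simp only [RCLike.ofReal_eq_zero] at hμ hν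
    rwa [Fintype.card_subtype, Fintype.card_subtype, hμ, hν, Module.End.eigenspace_zero,
      Module.End.eigenspace_zero]
  obtain ⟨σ, hσ⟩ := Equiv.Perm.exists_forall_iff_of_card_eq hcard.symm
  have hμ : ∀ i, 0 ≤ μ i := hP'.toLinearMap.nonneg_eigenvalues hn
  have hν : ∀ i, 0 ≤ ν i := hQ'.toLinearMap.nonneg_eigenvalues hn
  choose c hc0 hc using fun i => exists_ne_zero_sq_mul_eq (hμ (σ i)) (hν i) (hσ i).symm
  refine exists_isUnit_star_mul_mul_eq_of_orthonormalBasis (μ := fun i => μ (σ i))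
    (ν := fun i => ν i)
    ((hP'.isSymmetric.eigenvectorBasis hn).reindex σ.symm) (hQ'.isSymmetric.eigenvectorBasis hn)
    (fun i => Units.mk0 (c i : ℂ) (Complex.ofReal_ne_zero.mpr (hc0 i))) (fun i => ?_)
    (hQ'.isSymmetric.apply_eigenvectorBasis hn) (fun i => ?_)
  · rw [OrthonormalBasis.reindex_apply, Equiv.symm_symm]
    exact hP'.isSymmetric.apply_eigenvectorBasis hn (σ i)
  · rw [Units.val_mk0, Complex.star_def, Complex.conj_ofReal, ← sq]
    exact_mod_cast hc i

theorem exists_isUnit_star_mul_mul_eq_of_le {P Q T : H →L[ℂ] H}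
    (hcase : IsUnit P ∨ FiniteDimensional ℂ H) (hP : 0 ≤ P) (hQ : 0 ≤ Q) (hQP : Q ≤ P)
    (hT : IsUnit T) (hTQ : star T * P * T ≤ Q) :
    ∃ R : H →L[ℂ] H, IsUnit R ∧ star R * P * R = Q := by
  rcases hcase with hPu | hfin
  · have hPs : IsStrictlyPositive P := hPu.isStrictlyPositive hP
    exact exists_isUnit_star_mul_mul_eq_of_isStrictlyPositive hPs
      ((hT.isStrictlyPositive_star_left_conjugate_iff.mpr hPs).of_le hTQ)
  · exact exists_isUnit_star_mul_mul_eq_of_finrank_ker_eq hP hQ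
      (le_antisymm (Submodule.finrank_mono (ker_le_ker_of_le hQ hQP))
        (finrank_ker_le_of_star_mul_mul_le hP hT hTQ))

end Operators

section ConjAd

variable {M H : Type*} [AddCommMonoid M] [Module ℂ M]
  [NormedAddCommGroup H] [InnerProductSpace ℂ H] [CompleteSpace H]

@[simp] theorem conjAd_apply (T X : H →L[ℂ] H) : conjAd T X = star T * X * T := rfl

theorem conjAd_conjAd (S T X : H →L[ℂ] H) : conjAd T (conjAd S X) = conjAd (S * T) X := by
  simp [star_mul, mul_assoc]

theorem conjAd_one (X : H →L[ℂ] H) : conjAd 1 X = X := by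
  simp

theorem conjAd_comp_conjAd_comp (S T : H →L[ℂ] H) (Φ : M →ₗ[ℂ] (H →L[ℂ] H)) :
    (conjAd T).comp ((conjAd S).comp Φ) = (conjAd (S * T)).comp Φ :=
  LinearMap.ext fun _ => conjAd_conjAd _ _ _

theorem conjAd_one_comp (Φ : M →ₗ[ℂ] (H →L[ℂ] H)) : (conjAd (1 : H →L[ℂ] H)).comp Φ = Φ :=
  LinearMap.ext fun _ => conjAd_one _

theorem sum_star_mul_mul_eq_of_eq_sum {P : H →L[ℂ] H} {n : ℕ} {Φ : M →ₗ[ℂ] (H →L[ℂ] H)}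
    {T : Fin n → H →L[ℂ] H} {Φs : Fin n → M →ₗ[ℂ] (H →L[ℂ] H)} {x : M} (hΦ : Φ x = P)
    (hΦs : ∀ j, Φs j x = P) (h : Φ = ∑ j, (conjAd (T j)).comp (Φs j)) :
    ∑ j, star (T j) * P * T j = P := by
  simpa [hΦ, hΦs] using (LinearMap.congr_fun h x).symm

end ConjAd

section CPMaps

variable {A H : Type*} [Ring A] [StarRing A] [Algebra ℂ A]
  [NormedAddCommGroup H] [InnerProductSpace ℂ H]

theorem IsCPMap.add {Φ Ψ : A →ₗ[ℂ] (H →L[ℂ] H)} (hΦ : IsCPMap Φ) (hΨ : IsCPMap Ψ) :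
    IsCPMap (Φ + Ψ) := fun n a h => by
  simpa [inner_add_right, Finset.sum_add_distrib] using add_nonneg (hΦ n a h) (hΨ n a h)

variable [CompleteSpace H]

theorem IsCPMap.conjAd_comp {Φ : A →ₗ[ℂ] (H →L[ℂ] H)} (hΦ : IsCPMap Φ) (T : H →L[ℂ] H) :
    IsCPMap ((conjAd T).comp Φ) := fun n a h => by
  simpa only [LinearMap.comp_apply, conjAd_apply, inner_star_mul_mul_apply] using
    hΦ n a (fun i => T (h i))

theorem exists_conjAd_comp_eq_add {P a b : H →L[ℂ] H} {Φa Φb : A →ₗ[ℂ] (H →L[ℂ] H)}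
    (hcase : IsUnit P ∨ FiniteDimensional ℂ H) (hP : 0 ≤ P) (ha : IsUnit a)
    (hΦa : Φa ∈ CPP P) (hΦb : Φb ∈ CPP P) (hle : star a * P * a + star b * P * b ≤ P) :
    ∃ (R : (H →L[ℂ] H)ˣ) (Ψ : A →ₗ[ℂ] (H →L[ℂ] H)), Ψ ∈ CPP P ∧
      (conjAd (R : H →L[ℂ] H)).comp Ψ = (conjAd a).comp Φa + (conjAd b).comp Φb := by
  obtain ⟨_, ⟨R, rfl⟩, hR⟩ := exists_isUnit_star_mul_mul_eq_of_le hcase hP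
    (add_nonneg (star_left_conjugate_nonneg hP a) (star_left_conjugate_nonneg hP b)) hle ha
    (le_add_of_nonneg_right (star_left_conjugate_nonneg hP b))
  refine ⟨R, (conjAd (R⁻¹ : (H →L[ℂ] H)ˣ)).comp ((conjAd a).comp Φa + (conjAd b).comp Φb),
    ⟨((hΦa.1.conjAd_comp a).add (hΦb.1.conjAd_comp b)).conjAd_comp _, ?_⟩, ?_⟩
  · simp only [LinearMap.comp_apply, LinearMap.add_apply, hΦa.2, hΦb.2]
    rw [show conjAd a P + conjAd b P = conjAd (R : H →L[ℂ] H) P from hR.symm, conjAd_conjAd,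
      Units.mul_inv, conjAd_one]
  · rw [conjAd_comp_conjAd_comp, Units.inv_mul, conjAd_one_comp]

def IsPCExtremeAt (P : H →L[ℂ] H) (Φ : A →ₗ[ℂ] (H →L[ℂ] H)) (n : ℕ) : Prop :=
  ∀ (T : Fin n → (H →L[ℂ] H)) (Φs : Fin n → (A →ₗ[ℂ] (H →L[ℂ] H))),
    (∀ j, IsUnit (T j)) → (∀ j, Φs j ∈ CPP (A := A) P) →
    (∑ j, star (T j) * P * T j) = P →
    Φ = ∑ j, (conjAd (T j)).comp (Φs j) →
    ∀ j, ∃ S : H →L[ℂ] H, IsUnit S ∧ Φs j = (conjAd S).comp Φ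

theorem isPCExtreme_iff {P : H →L[ℂ] H} {Φ : A →ₗ[ℂ] (H →L[ℂ] H)} :
    IsPCExtreme P Φ ↔ Φ ∈ CPP P ∧ ∀ n, IsPCExtremeAt P Φ n :=
  Iff.rfl

theorem isPCExtremeAt_one (P : H →L[ℂ] H) (Φ : A →ₗ[ℂ] (H →L[ℂ] H)) :
    IsPCExtremeAt P Φ 1 := by
  intro T Φs hT _ _ hdec j
  obtain ⟨u, hu⟩ := hT 0
  refine ⟨(u⁻¹ : (H →L[ℂ] H)ˣ), Units.isUnit _, ?_⟩
  rw [Fin.eq_zero j, hdec, Fin.sum_univ_one, ← hu, conjAd_comp_conjAd_comp, Units.mul_inv,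
    conjAd_one_comp]

theorem isPCExtremeAt_two_iff {P : H →L[ℂ] H} {Φ : A →ₗ[ℂ] (H →L[ℂ] H)} :
    IsPCExtremeAt P Φ 2 ↔
      ∀ (T₁ T₂ : H →L[ℂ] H) (Φ₁ Φ₂ : A →ₗ[ℂ] (H →L[ℂ] H)),
        IsUnit T₁ → IsUnit T₂ → Φ₁ ∈ CPP (A := A) P → Φ₂ ∈ CPP (A := A) P →
        star T₁ * P * T₁ + star T₂ * P * T₂ = P →
        Φ = (conjAd T₁).comp Φ₁ + (conjAd T₂).comp Φ₂ →
        (∃ S₁ : H →L[ℂ] H, IsUnit S₁ ∧ Φ₁ = (conjAd S₁).comp Φ) ∧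
        (∃ S₂ : H →L[ℂ] H, IsUnit S₂ ∧ Φ₂ = (conjAd S₂).comp Φ) := by
  simp only [IsPCExtremeAt, Fin.forall_fin_two, Fin.sum_univ_two]
  refine ⟨fun h T₁ T₂ Φ₁ Φ₂ hT₁ hT₂ hΦ₁ hΦ₂ => ?_, fun h T Φs hT hΦs => ?_⟩
  · exact h ![T₁, T₂] ![Φ₁, Φ₂] ⟨hT₁, hT₂⟩ ⟨hΦ₁, hΦ₂⟩
  · exact h (T 0) (T 1) (Φs 0) (Φs 1) hT.1 hT.2 hΦs.1 hΦs.2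

theorem IsPCExtremeAt.add_two {P : H →L[ℂ] H} {Φ : A →ₗ[ℂ] (H →L[ℂ] H)} {m : ℕ}
    (hm : IsPCExtremeAt P Φ (m + 1)) (hcase : IsUnit P ∨ FiniteDimensional ℂ H) (hP : 0 ≤ P)
    (hΦ : Φ 1 = P) (h2 : IsPCExtremeAt P Φ 2) :
    IsPCExtremeAt P Φ (m + 2) := by
  intro T Φs hT hΦs hsum hdec
  rw [Fin.sum_univ_succ, Fin.sum_univ_succ, ← add_assoc] at hsum
  obtain ⟨R, Ψ, hΨ, hRΨ⟩ := exists_conjAd_comp_eq_add hcase hP (hT 0) (hΦs 0) (hΦs 1)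
    (hsum ▸ le_add_of_nonneg_right (Finset.sum_nonneg fun i _ => star_left_conjugate_nonneg hP _))
  set T' : Fin (m + 1) → H →L[ℂ] H := Fin.cons (R : H →L[ℂ] H) fun i => T i.succ.succ
  set Φs' : Fin (m + 1) → A →ₗ[ℂ] (H →L[ℂ] H) := Fin.cons Ψ fun i => Φs i.succ.succ
  have hΦs' : ∀ j, Φs' j ∈ CPP P := Fin.cases hΨ fun i => hΦs _
  have hdec' : Φ = ∑ j, (conjAd (T' j)).comp (Φs' j) := by
    rw [Fin.sum_univ_succ, hdec, Fin.sum_univ_succ, Fin.sum_univ_succ, ← add_assoc]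
    simp [T', Φs', hRΨ]
  have key := hm T' Φs' (Fin.cases R.isUnit fun i => hT _) hΦs'
    (sum_star_mul_mul_eq_of_eq_sum hΦ (fun j => (hΦs' j).2) hdec') hdec'
  obtain ⟨_, ⟨S, rfl⟩, hΨS⟩ := key 0
  set W : H →L[ℂ] H := (R⁻¹ : (H →L[ℂ] H)ˣ) * (S⁻¹ : (H →L[ℂ] H)ˣ)
  have hW : Φ = (conjAd W).comp ((conjAd (R : H →L[ℂ] H)).comp Ψ) := by
    rw [show Ψ = _ from hΨS, conjAd_comp_conjAd_comp, conjAd_comp_conjAd_comp]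
    simp [W, conjAd_one_comp]
  rw [hRΨ, LinearMap.comp_add, conjAd_comp_conjAd_comp, conjAd_comp_conjAd_comp] at hW
  have hdec₂ : Φ = ∑ j, (conjAd (![T 0 * W, T 1 * W] j)).comp (![Φs 0, Φs 1] j) := by
    simpa [Fin.sum_univ_two] using hW
  have h01 := h2 _ _ (by simp [Fin.forall_fin_two, (hT 0).mul, (hT 1).mul, W])
    (by simp [Fin.forall_fin_two, hΦs]) (sum_star_mul_mul_eq_of_eq_sum hΦ
      (by simp [Fin.forall_fin_two, (hΦs 0).2, (hΦs 1).2]) hdec₂) hdec₂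
  exact Fin.cases (h01 0) (Fin.cases (h01 1) fun i => key i.succ)

theorem isPCExtremeAt_of_two {P : H →L[ℂ] H} {Φ : A →ₗ[ℂ] (H →L[ℂ] H)}
    (hcase : IsUnit P ∨ FiniteDimensional ℂ H) (hP : 0 ≤ P) (hΦ : Φ 1 = P)
    (h2 : IsPCExtremeAt P Φ 2) : ∀ n, IsPCExtremeAt P Φ n
  | 0 => fun _ _ _ _ _ _ j => j.elim0
  | 1 => isPCExtremeAt_one P Φ
  | m + 2 => (isPCExtremeAt_of_two hcase hP hΦ h2 (m + 1)).add_two hcase hP hΦ h2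

end CPMaps

theorem stmt2_general {A : Type*} [NormedRing A] [StarRing A] [NormedAlgebra ℂ A]
    {H : Type*} [NormedAddCommGroup H] [InnerProductSpace ℂ H] [CompleteSpace H]
    (P : H →L[ℂ] H) (hP : IsPosOp P) (hcase : IsUnit P ∨ FiniteDimensional ℂ H)
    (Φ : A →ₗ[ℂ] (H →L[ℂ] H)) (hΦ : Φ ∈ CPP (A := A) P) :
    IsPCExtreme P Φ ↔
      ∀ (T₁ T₂ : H →L[ℂ] H) (Φ₁ Φ₂ : A →ₗ[ℂ] (H →L[ℂ] H)),
        IsUnit T₁ → IsUnit T₂ → Φ₁ ∈ CPP (A := A) P → Φ₂ ∈ CPP (A := A) P →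
        star T₁ * P * T₁ + star T₂ * P * T₂ = P →
        Φ = (conjAd T₁).comp Φ₁ + (conjAd T₂).comp Φ₂ →
        (∃ S₁ : H →L[ℂ] H, IsUnit S₁ ∧ Φ₁ = (conjAd S₁).comp Φ) ∧
        (∃ S₂ : H →L[ℂ] H, IsUnit S₂ ∧ Φ₂ = (conjAd S₂).comp Φ) := by
  rw [isPCExtreme_iff, ← isPCExtremeAt_two_iff]
  exact ⟨fun h => h.2 2,
    fun h2 => ⟨hΦ, isPCExtremeAt_of_two hcase (isPosOp_iff_nonneg.mp hP) hΦ.2 h2⟩⟩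

/-- If `P` is invertible or `H` is finite-dimensional, then
`Φ ∈ CP^{(P)}` is a `P`-`C*`-extreme point iff the two-term proper decomposition
condition holds. -/
theorem stmt2 {A : Type*} [NormedRing A] [StarRing A] [CStarRing A] [NormedAlgebra ℂ A] [StarModule ℂ A] [CompleteSpace A]
    {H : Type*} [NormedAddCommGroup H] [InnerProductSpace ℂ H] [CompleteSpace H]
    (P : H →L[ℂ] H) (hP : IsPosOp P) (hcase : IsUnit P ∨ FiniteDimensional ℂ H)
    (Φ : A →ₗ[ℂ] (H →L[ℂ] H)) (hΦ : Φ ∈ CPP (A := A) P) :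
    IsPCExtreme P Φ ↔
      ∀ (T₁ T₂ : H →L[ℂ] H) (Φ₁ Φ₂ : A →ₗ[ℂ] (H →L[ℂ] H)),
        IsUnit T₁ → IsUnit T₂ → Φ₁ ∈ CPP (A := A) P → Φ₂ ∈ CPP (A := A) P →
        star T₁ * P * T₁ + star T₂ * P * T₂ = P →
        Φ = (conjAd T₁).comp Φ₁ + (conjAd T₂).comp Φ₂ →
        (∃ S₁ : H →L[ℂ] H, IsUnit S₁ ∧ Φ₁ = (conjAd S₁).comp Φ) ∧
        (∃ S₂ : H →L[ℂ] H, IsUnit S₂ ∧ Φ₂ = (conjAd S₂).comp Φ) :=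
  stmt2_general P hP hcase Φ hΦ
end
end
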